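/- Assume the subsonic condition γρ*^{γ−1} > m*²/ρ*². Then there exists ω₀ > 0 such that for every ξ ∈ ℝ, every root λ ∈ ℂ of the dispersion relation λ² + (μξ² + 2iξ m*/ρ*)·λ + ξ²·α(ξ) = 0 satisfies Re λ ≤ −ω₀ ξ². (Strict dissipativity of regularity-gain type for subsonic states.) -/

import Mathlib

set_option maxHeartbeats 1000000

/-- `α(ξ) = p'(ρ*) − m*²/ρ*² + (k²/2)ξ²` with `p(ρ) = ρ^γ`. -/
noncomputable def alphaSym (ρs ms k γ ξ : ℝ) : ℝ :=
  γ * ρs ^ (γ - 1) - ms ^ 2 / ρs ^ 2 + k ^ 2 / 2 * ξ ^ 2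

/-- Strict dissipativity of regularity-gain type for subsonic states: there is `ω₀ > 0` such
that every root `λ` of the dispersion relation
`λ² + (μξ² + 2iξm*/ρ*)λ + ξ²α(ξ) = 0` satisfies `Re λ ≤ −ω₀ξ²`. -/
theorem subsonic_strict_dissipativity
    (ρs ms μ k γ : ℝ) (hρ : 0 < ρs) (hμ : 0 < μ) (hk : 0 < k) (hγ : 1 < γ)
    (hsub : ms ^ 2 / ρs ^ 2 < γ * ρs ^ (γ - 1)) :
    ∃ ω₀ : ℝ, 0 < ω₀ ∧
      ∀ ξ : ℝ, ∀ lam : ℂ,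
        lam ^ 2
            + (((μ * ξ ^ 2 : ℝ) : ℂ) + 2 * Complex.I * (ξ : ℂ) * ((ms / ρs : ℝ) : ℂ)) * lam
            + ((ξ ^ 2 : ℝ) : ℂ) * ((alphaSym ρs ms k γ ξ : ℝ) : ℂ) = 0 →
          lam.re ≤ -ω₀ * ξ ^ 2 := by
  set a : ℝ := γ * ρs ^ (γ - 1) - ms ^ 2 / ρs ^ 2 with ha_def
  have ha : 0 < a := sub_pos.mpr hsub
  set b : ℝ := ms / ρs with hb_def
  set c : ℝ := min a (k ^ 2 / 2) with hc_def
  have hc : 0 < c := lt_min ha (by positivity)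
  set C : ℝ := (max (μ ^ 2) (4 * b ^ 2)) + 1 with hC_def
  have hC : 0 < C := by positivity
  set δ : ℝ := min (1 / 2) (c / (8 * C)) with hd_def
  have hδ : 0 < δ := lt_min (by norm_num) (by positivity)
  have hdhalf : δ ≤ 1 / 2 := min_le_left _ _
  have hδC : δ ≤ c / (8 * C) := min_le_right _ _
  have hμ2C : μ ^ 2 ≤ C := by
    rw [hC_def]; linarith only [le_max_left (μ ^ 2) (4 * b ^ 2)]
  have hb2C : 4 * b ^ 2 ≤ C := by
    rw [hC_def]; linarith only [le_max_right (μ ^ 2) (4 * b ^ 2)]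
  have hca : c ≤ a := min_le_left _ _
  have hck : c ≤ k ^ 2 / 2 := min_le_right _ _
  clear_value a b c C δ
  refine ⟨μ * δ / (1 + δ), by positivity, ?_⟩
  intro ξ lam heq
  have h1 := congrArg Complex.re heq
  have h2 := congrArg Complex.im heq
  simp [pow_two, Complex.add_re, Complex.add_im, Complex.mul_re, Complex.mul_im] at h1 h2
  set x : ℝ := lam.re with hx
  set y : ℝ := lam.im with hy
  clear_value x y
  rcases eq_or_ne ξ 0 with hξ | hξ
  · subst hξ
    have hl2 : lam ^ 2 = 0 := by simpa using heq
    have hl : lam = 0 := by simpa [pow_eq_zero_iff] using hl2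
    rw [hx, hl]
    simp
  · have hξ2 : 0 < ξ ^ 2 := by positivity
    have hξ4 : 0 < ξ ^ 4 := by positivity
    set q : ℝ := a * ξ ^ 2 + k ^ 2 / 2 * ξ ^ 4 with hq_def
    clear_value q
    have hq : 0 < q := by rw [hq_def]; positivity
    set s : ℝ := x ^ 2 + y ^ 2 with hs_def
    clear_value s
    have hs : 0 ≤ s := by rw [hs_def]; positivity
    have hal : alphaSym ρs ms k γ ξ = a + k ^ 2 / 2 * ξ ^ 2 := by
      rw [ha_def]; rfl
    rw [hal] at h1
    have hqc : c * (ξ ^ 2 + ξ ^ 4) ≤ q := by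
      have e1 := mul_le_mul_of_nonneg_right hca hξ2.le
      have e2 := mul_le_mul_of_nonneg_right hck hξ4.le
      rw [hq_def]
      linarith only [e1, e2]
    have hPC : μ ^ 2 * ξ ^ 4 + 4 * b ^ 2 * ξ ^ 2 ≤ C * (ξ ^ 2 + ξ ^ 4) := by
      have e1 := mul_le_mul_of_nonneg_right hμ2C hξ4.le
      have e2 := mul_le_mul_of_nonneg_right hb2C hξ2.le
      linarith only [e1, e2]
    have hre : x ^ 2 - y ^ 2 + μ * ξ ^ 2 * x - 2 * ξ * b * y + q = 0 := by
      rw [hq_def]; linear_combination h1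
    have him : 2 * x * y + μ * ξ ^ 2 * y + 2 * ξ * b * x = 0 := by
      linear_combination h2
    have key : x * (s + q) = -(μ * ξ ^ 2) * s := by
      rw [hs_def]; linear_combination x * hre + y * him
    have hsd : δ * q ≤ s := by
      by_contra hcon
      push_neg at hcon
      have hδq : δ * q ≤ 1 / 2 * q := mul_le_mul_of_nonneg_right hdhalf hq.le
      have hqs : (0:ℝ) ≤ q - s := by linarith only [hcon, hδq, hq, hs]
      have hqs2 : q / 2 < q - s := by linarith only [hcon, hδq, hq]
      set u : ℝ := -(μ * ξ ^ 2 * x) + 2 * ξ * b * y with hu_def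
      clear_value u
      have hqsu : q - s ≤ u := by
        have hqsid : q - s = -2 * x ^ 2 + u := by
          rw [hu_def, hs_def]; linear_combination hre
        linarith only [hqsid, sq_nonneg x]
      have hu2 : u ^ 2 ≤ (μ ^ 2 * ξ ^ 4 + 4 * b ^ 2 * ξ ^ 2) * s := by
        have hid : (μ ^ 2 * ξ ^ 4 + 4 * b ^ 2 * ξ ^ 2) * s - u ^ 2
            = (μ * ξ ^ 2 * y + 2 * ξ * b * x) ^ 2 := by
          rw [hu_def, hs_def]; ring
        linarith only [hid, sq_nonneg (μ * ξ ^ 2 * y + 2 * ξ * b * x)]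
      have hcs : (q - s) ^ 2 ≤ (μ ^ 2 * ξ ^ 4 + 4 * b ^ 2 * ξ ^ 2) * s :=
        le_trans (pow_le_pow_left₀ hqs hqsu 2) hu2
      have h8 : C * δ ≤ c / 8 := by
        have e0 := mul_le_mul_of_nonneg_left hδC hC.le
        have e : C * (c / (8 * C)) = c / 8 := by
          field_simp
        linarith only [e0, e]
      have hPs : (μ ^ 2 * ξ ^ 4 + 4 * b ^ 2 * ξ ^ 2) * s
          ≤ C * (ξ ^ 2 + ξ ^ 4) * (δ * q) := by
        have e0 := mul_le_mul hPC (le_of_lt hcon) hs (by positivity :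
          (0:ℝ) ≤ C * (ξ ^ 2 + ξ ^ 4))
        linarith only [e0]
      have hct : C * (ξ ^ 2 + ξ ^ 4) * (δ * q) ≤ (c / 8) * ((ξ ^ 2 + ξ ^ 4) * q) := by
        have htq : (0:ℝ) ≤ (ξ ^ 2 + ξ ^ 4) * q := by positivity
        have e0 := mul_le_mul_of_nonneg_right h8 htq
        linarith only [e0]
      have hcq : (c / 8) * ((ξ ^ 2 + ξ ^ 4) * q) ≤ q ^ 2 / 8 := by
        have e0 := mul_le_mul_of_nonneg_right hqc (by positivity : (0:ℝ) ≤ q / 8)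
        linarith only [e0]
      have hA : (q / 2) ^ 2 < (q - s) ^ 2 :=
        pow_lt_pow_left₀ hqs2 (by positivity) two_ne_zero
      linarith only [hA, hcs, hPs, hct, hcq, sq_nonneg q]
    have hspq : 0 < s + q := by linarith only [hs, hq]
    have h1δ : 0 < 1 + δ := by linarith only [hδ]
    have hM : 0 < (s + q) * (1 + δ) := mul_pos hspq h1δ
    refine le_of_mul_le_mul_right ?_ hM
    have e : (-(μ * δ / (1 + δ)) * ξ ^ 2) * ((s + q) * (1 + δ))
        = -(μ * δ) * ξ ^ 2 * (s + q) := by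
      field_simp
    have hstep : μ * ξ ^ 2 * (δ * q) ≤ μ * ξ ^ 2 * s :=
      mul_le_mul_of_nonneg_left hsd (le_of_lt (mul_pos hμ hξ2))
    calc x * ((s + q) * (1 + δ)) = x * (s + q) * (1 + δ) := by ring
      _ = -(μ * ξ ^ 2) * s * (1 + δ) := by rw [key]
      _ ≤ -(μ * δ) * ξ ^ 2 * (s + q) := by linarith only [hstep]
      _ = (-(μ * δ / (1 + δ)) * ξ ^ 2) * ((s + q) * (1 + δ)) := e.symm
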